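/- arXiv:0901.3900 — 6 statements merged into one kernel-verified Lean document; each statement's English description precedes it below -/
import Mathlib

section
/- Let {τ_{m,n}}_{(m,n)∈ℤ²} be a solution of the lattice q-UC hierarchy consisting of nowhere-vanishing functions. Then for any three indices i, j, k ∈ I ∪ J and all (m,n) ∈ ℤ², the three-term relation of the q-UC hierarchy holds: (t_i − t_j) T_i T_j(τ_{m,n}) T_k(τ_{m+1,n}) + (t_j − t_k) T_j T_k(τ_{m,n}) T_i(τ_{m+1,n}) + (t_k − t_i) T_i T_k(τ_{m,n}) T_j(τ_{m+1,n}) = 0. -/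
/-- The `q`-shift operator on the point `t`: `t_i ↦ q t_i` if `i > 0` (i.e. `i ∈ I`),
`t_i ↦ q⁻¹ t_i` if `i < 0` (i.e. `i ∈ J`), other coordinates unchanged. -/
noncomputable def Tshift (q : ℂ) (i : ℤ) (t : ℤ → ℂ) : ℤ → ℂ :=
  Function.update t i ((if 0 < i then q else q⁻¹) * t i)

/-- A family `τ : ℤ² → ((ℤ → ℂ) → ℂ)` solves the lattice `q`-UC hierarchy. -/
def SolvesLUC (q : ℂ) (I J : Finset ℤ) (τ : ℤ → ℤ → (ℤ → ℂ) → ℂ) : Prop :=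
  ∀ i ∈ I ∪ J, ∀ j ∈ I ∪ J, ∀ m n : ℤ, ∀ t : ℤ → ℂ, (∀ l, t l ≠ 0) →
    t i * τ m (n + 1) (Tshift q i t) * τ (m + 1) n (Tshift q j t)
      - t j * τ m (n + 1) (Tshift q j t) * τ (m + 1) n (Tshift q i t)
      = (t i - t j) * τ m n (Tshift q i (Tshift q j t)) * τ (m + 1) (n + 1) t

theorem Tshift_comm (q : ℂ) (a b : ℤ) (t : ℤ → ℂ) :
    Tshift q a (Tshift q b t) = Tshift q b (Tshift q a t) := by
  rcases eq_or_ne a b with rfl | h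
  · rfl
  · unfold Tshift
    rw [Function.update_of_ne h, Function.update_of_ne (Ne.symm h),
      Function.update_comm h]

/-- a nowhere-vanishing solution of the lattice `q`-UC hierarchy satisfies
the three-term relation of the `q`-UC hierarchy:
`(t_i − t_j) T_i T_j(τ_{m,n}) T_k(τ_{m+1,n}) + (t_j − t_k) T_j T_k(τ_{m,n}) T_i(τ_{m+1,n})
  + (t_k − t_i) T_i T_k(τ_{m,n}) T_j(τ_{m+1,n}) = 0`. -/
theorem LUC_implies_qUC_three_term
    (q : ℂ) (hq : q ≠ 0) (I J : Finset ℤ) (hI : ∀ i ∈ I, 0 < i) (hJ : ∀ j ∈ J, j < 0)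
    (τ : ℤ → ℤ → (ℤ → ℂ) → ℂ)
    (hτ0 : ∀ m n : ℤ, ∀ t : ℤ → ℂ, (∀ l, t l ≠ 0) → τ m n t ≠ 0)
    (hτ : SolvesLUC q I J τ) :
    ∀ i ∈ I ∪ J, ∀ j ∈ I ∪ J, ∀ k ∈ I ∪ J, ∀ m n : ℤ, ∀ t : ℤ → ℂ, (∀ l, t l ≠ 0) →
      (t i - t j) * τ m n (Tshift q i (Tshift q j t)) * τ (m + 1) n (Tshift q k t)
        + (t j - t k) * τ m n (Tshift q j (Tshift q k t)) * τ (m + 1) n (Tshift q i t)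
        + (t k - t i) * τ m n (Tshift q i (Tshift q k t)) * τ (m + 1) n (Tshift q j t)
        = 0 := by
  intro i hi j hj k hk m n t ht
  have hD : τ (m + 1) (n + 1) t ≠ 0 := hτ0 (m + 1) (n + 1) t ht
  have h1 := hτ i hi j hj m n t ht
  have h2 := hτ j hj k hk m n t ht
  have h3 := hτ k hk i hi m n t ht
  rw [Tshift_comm q k i t] at h3
  have key : ((t i - t j) * τ m n (Tshift q i (Tshift q j t)) * τ (m + 1) n (Tshift q k t)
        + (t j - t k) * τ m n (Tshift q j (Tshift q k t)) * τ (m + 1) n (Tshift q i t)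
        + (t k - t i) * τ m n (Tshift q i (Tshift q k t)) * τ (m + 1) n (Tshift q j t))
        * τ (m + 1) (n + 1) t = 0 := by
    linear_combination -τ (m + 1) n (Tshift q k t) * h1 - τ (m + 1) n (Tshift q i t) * h2
      - τ (m + 1) n (Tshift q j t) * h3
  exact (mul_eq_zero.mp key).resolve_right hD
end

section
/- Let {τ_{m,n}}_{(m,n)∈ℤ²} be a solution of the lattice q-UC hierarchy consisting of nowhere-vanishing functions, and define u_{i,m,n} = (T_i(τ_{m+1,n}) τ_{m,n+2}) / (T_i(τ_{m,n+1}) τ_{m+1,n+1}). Then for all i ≠ j in I ∪ J, all (m,n) ∈ ℤ², and every point t with t_i ≠ t_j, the evolution equation holds: T_j(u_{i,m,n}) = u_{i,m,n+1} · (t_i u_{j,m+1,n} − t_j u_{i,m+1,n}) / (t_i u_{j,m,n+1} − t_j u_{i,m,n+1}), the denominator being nonzero at such points. -/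
/-- `u_{i,m,n} = (T_i(τ_{m+1,n}) τ_{m,n+2}) / (T_i(τ_{m,n+1}) τ_{m+1,n+1})`. -/
noncomputable def uOf (q : ℂ) (τ : ℤ → ℤ → (ℤ → ℂ) → ℂ) (i m n : ℤ) (t : ℤ → ℂ) : ℂ :=
  τ (m + 1) n (Tshift q i t) * τ m (n + 2) t
    / (τ m (n + 1) (Tshift q i t) * τ (m + 1) (n + 1) t)

/-! The LUC bilinear equation turns each combination `t_i u_j − t_j u_i` into a single quotient
of `τ`-functions. Taken at `(m, n+1)` and `(m+1, n)`, these make the right-hand side of the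
evolution equation a product of `τ`-quotients which telescopes to `T_j(u_{i,m,n})`. -/

lemma Tshift_ne_zero {q : ℂ} (hq : q ≠ 0) (i : ℤ) {t : ℤ → ℂ} (ht : ∀ l, t l ≠ 0) (l : ℤ) :
    Tshift q i t l ≠ 0 := by
  unfold Tshift
  rcases eq_or_ne l i with rfl | h
  · rw [Function.update_self]
    exact mul_ne_zero (by split <;> simp [hq]) (ht l)
  · rw [Function.update_of_ne h]
    exact ht l

lemma mul_uOf_sub_mul_uOf {q : ℂ} (hq : q ≠ 0) {I J : Finset ℤ} {τ : ℤ → ℤ → (ℤ → ℂ) → ℂ}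
    (hτ0 : ∀ m n : ℤ, ∀ t : ℤ → ℂ, (∀ l, t l ≠ 0) → τ m n t ≠ 0) (hτ : SolvesLUC q I J τ)
    {i j : ℤ} (hi : i ∈ I ∪ J) (hj : j ∈ I ∪ J) (m n : ℤ) {t : ℤ → ℂ} (ht : ∀ l, t l ≠ 0) :
    t i * uOf q τ j m n t - t j * uOf q τ i m n t
      = (t i - t j) * τ m n (Tshift q i (Tshift q j t)) * τ m (n + 2) t
        / (τ m (n + 1) (Tshift q i t) * τ m (n + 1) (Tshift q j t)) := by
  have := hτ0 m (n + 1) _ (Tshift_ne_zero hq i ht)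
  have := hτ0 m (n + 1) _ (Tshift_ne_zero hq j ht)
  have := hτ0 (m + 1) (n + 1) t ht
  simp only [uOf]
  field_simp
  linear_combination τ m (n + 2) t * hτ i hi j hj m n t ht

theorem LUC_u_evolution_general
    (q : ℂ) (hq : q ≠ 0) (I J : Finset ℤ)
    (τ : ℤ → ℤ → (ℤ → ℂ) → ℂ)
    (hτ0 : ∀ m n : ℤ, ∀ t : ℤ → ℂ, (∀ l, t l ≠ 0) → τ m n t ≠ 0)
    (hτ : SolvesLUC q I J τ)
    (i j : ℤ) (hi : i ∈ I ∪ J) (hj : j ∈ I ∪ J)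
    (m n : ℤ) (t : ℤ → ℂ) (ht : ∀ l, t l ≠ 0) (htij : t i ≠ t j) :
    t i * uOf q τ j m (n + 1) t - t j * uOf q τ i m (n + 1) t ≠ 0 ∧
    uOf q τ i m n (Tshift q j t)
      = uOf q τ i m (n + 1) t
        * (t i * uOf q τ j (m + 1) n t - t j * uOf q τ i (m + 1) n t)
        / (t i * uOf q τ j m (n + 1) t - t j * uOf q τ i m (n + 1) t) := by
  have hTj := Tshift_ne_zero hq j ht
  have hTij := Tshift_ne_zero hq i hTj
  have := sub_ne_zero.mpr htij
  have := hτ0 m (n + 1) _ hTij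
  have := hτ0 (m + 1) n _ hTij
  have := hτ0 m (n + 2) _ hTj
  have := hτ0 (m + 1) (n + 1) _ hTj
  have := hτ0 m (n + 2) _ (Tshift_ne_zero hq i ht)
  have := hτ0 (m + 1) (n + 1) _ (Tshift_ne_zero hq i ht)
  have := hτ0 m (n + 3) t ht
  have := hτ0 (m + 1) (n + 2) t ht
  have hn : n + 1 + 1 = n + 2 := by ring
  have hn' : n + 1 + 2 = n + 3 := by ring
  rw [mul_uOf_sub_mul_uOf hq hτ0 hτ hi hj (m + 1) n ht,
    mul_uOf_sub_mul_uOf hq hτ0 hτ hi hj m (n + 1) ht]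
  simp only [uOf, hn, hn']
  constructor
  · positivity
  · field_simp

/-- Proposition 2.4: for a nowhere-vanishing solution `{τ_{m,n}}` of the
lattice `q`-UC hierarchy and `u_{i,m,n}` as above, at every point `t` with `t_i ≠ t_j`
the denominator `t_i u_{j,m,n+1} − t_j u_{i,m,n+1}` is nonzero and the evolution equation
`T_j(u_{i,m,n}) = u_{i,m,n+1} (t_i u_{j,m+1,n} − t_j u_{i,m+1,n})
/ (t_i u_{j,m,n+1} − t_j u_{i,m,n+1})` holds. -/
theorem LUC_u_evolution
    (q : ℂ) (hq : q ≠ 0) (I J : Finset ℤ) (hI : ∀ i ∈ I, 0 < i) (hJ : ∀ j ∈ J, j < 0)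
    (τ : ℤ → ℤ → (ℤ → ℂ) → ℂ)
    (hτ0 : ∀ m n : ℤ, ∀ t : ℤ → ℂ, (∀ l, t l ≠ 0) → τ m n t ≠ 0)
    (hτ : SolvesLUC q I J τ)
    (i j : ℤ) (hi : i ∈ I ∪ J) (hj : j ∈ I ∪ J) (hij : i ≠ j)
    (m n : ℤ) (t : ℤ → ℂ) (ht : ∀ l, t l ≠ 0) (htij : t i ≠ t j) :
    t i * uOf q τ j m (n + 1) t - t j * uOf q τ i m (n + 1) t ≠ 0 ∧
    uOf q τ i m n (Tshift q j t)
      = uOf q τ i m (n + 1) t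
        * (t i * uOf q τ j (m + 1) n t - t j * uOf q τ i (m + 1) n t)
        / (t i * uOf q τ j m (n + 1) t - t j * uOf q τ i m (n + 1) t) :=
  LUC_u_evolution_general q hq I J τ hτ0 hτ i j hi hj m n t ht htij
end

section
/- Let M ≥ 1 and let x_m, y_m (m ∈ ℤ/Mℤ) be elements of a commutative ring. Define P_m = Σ_{a=1}^{M} (Π_{i=1}^{a-1} x_{m+i}) (Π_{i=a+1}^{M} y_{m+i}), with indices taken modulo M. Then for every m ∈ ℤ/Mℤ, the identity y_m P_{m-1} + x_{m+1} P_{m+1} = (x_m + y_{m+1}) P_m holds; equivalently, the birational map x'_m = y_m P_{m-1}/P_m, y'_m = x_m P_m/P_{m-1} satisfies x'_m y'_m = x_m y_m and x'_m + y'_{m+1} = x_m + y_{m+1}. -/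
/-- `P_m = ∑_{a=1}^{M} (∏_{i=1}^{a-1} x_{m+i}) (∏_{i=a+1}^{M} y_{m+i})`,
indices taken modulo `M`. -/
def Ppoly {R : Type*} [CommRing R] (M : ℕ) (x y : ZMod M → R) (m : ZMod M) : R :=
  ∑ a ∈ Finset.Icc 1 M,
    (∏ i ∈ Finset.Ico 1 a, x (m + (i : ZMod M)))
      * ∏ i ∈ Finset.Icc (a + 1) M, y (m + (i : ZMod M))

namespace PpolyAux

open Finset

variable {R : Type*} [CommRing R] (M : ℕ) (x y : ZMod M → R)

/-- The `a`-th term of `Ppoly`. -/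
def T (m : ZMod M) (a : ℕ) : R :=
  (∏ i ∈ Finset.Ico 1 a, x (m + (i : ZMod M)))
    * ∏ i ∈ Finset.Icc (a + 1) M, y (m + (i : ZMod M))

lemma Ppoly_eq (m : ZMod M) :
    Ppoly M x y m = ∑ a ∈ Finset.Icc 1 M, T M x y m a := rfl

lemma shift1 (m : ZMod M) (a : ℕ) :
    (∏ i ∈ Ico 1 a, x ((m - 1) + (i : ZMod M)))
      = ∏ i ∈ range (a - 1), x (m + (i : ZMod M)) := by
  rw [prod_Ico_eq_prod_range]
  refine prod_congr rfl fun j _ => ?_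
  congr 1
  push_cast
  ring

lemma shift2 (m : ZMod M) (a : ℕ) :
    (∏ i ∈ Icc (a + 1) M, y ((m - 1) + (i : ZMod M)))
      = ∏ i ∈ Ico a M, y (m + (i : ZMod M)) := by
  rw [← Finset.Ico_add_one_right_eq_Icc, prod_Ico_eq_prod_range, prod_Ico_eq_prod_range]
  have h : M + 1 - (a + 1) = M - a := by omega
  rw [h]
  refine prod_congr rfl fun j _ => ?_
  congr 1
  push_cast
  ring

lemma shift3 (m : ZMod M) (a : ℕ) :
    (∏ i ∈ Ico 1 a, x ((m + 1) + (i : ZMod M)))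
      = ∏ i ∈ Ico 2 (a + 1), x (m + (i : ZMod M)) := by
  rw [prod_Ico_eq_prod_range, prod_Ico_eq_prod_range]
  have h : a + 1 - 2 = a - 1 := by omega
  rw [h]
  refine prod_congr rfl fun j _ => ?_
  congr 1
  push_cast
  ring

lemma shift4 (m : ZMod M) (a : ℕ) :
    (∏ i ∈ Icc (a + 1) M, y ((m + 1) + (i : ZMod M)))
      = ∏ i ∈ Icc (a + 2) (M + 1), y (m + (i : ZMod M)) := by
  rw [← Finset.Ico_add_one_right_eq_Icc, ← Finset.Ico_add_one_right_eq_Icc, prod_Ico_eq_prod_range,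
    prod_Ico_eq_prod_range]
  have h : M + 1 + 1 - (a + 2) = M + 1 - (a + 1) := by omega
  rw [h]
  refine prod_congr rfl fun j _ => ?_
  congr 1
  push_cast
  ring

lemma castM : ((M : ℕ) : ZMod M) = 0 := ZMod.natCast_self M

lemma castM1 : ((M + 1 : ℕ) : ZMod M) = 1 := by
  push_cast [ZMod.natCast_self]
  ring

/-- `y m · T_{m-1,a}` in normalized form. -/
lemma yT (m : ZMod M) (a : ℕ) (h2 : a ≤ M) :
    y m * T M x y (m - 1) a
      = (∏ i ∈ range (a - 1), x (m + (i : ZMod M)))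
          * ∏ i ∈ Icc a M, y (m + (i : ZMod M)) := by
  rw [T, shift1, shift2]
  rw [← Finset.Ico_add_one_right_eq_Icc (a := a), prod_Ico_succ_top h2]
  have : y (m + ((M : ℕ) : ZMod M)) = y m := by rw [castM, add_zero]
  rw [this]
  ring

lemma xT (m : ZMod M) (a : ℕ) (h1 : 2 ≤ a) :
    x m * T M x y m (a - 1)
      = (∏ i ∈ range (a - 1), x (m + (i : ZMod M)))
          * ∏ i ∈ Icc a M, y (m + (i : ZMod M)) := by
  have ha : a - 1 + 1 = a := by omega
  rw [T, ha, range_eq_Ico, prod_eq_prod_Ico_succ_bot (by omega : 0 < a - 1)]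
  have : x (m + ((0 : ℕ) : ZMod M)) = x m := by norm_num
  rw [this]
  ring

lemma yT_xT (m : ZMod M) (a : ℕ) (h1 : 2 ≤ a) (h2 : a ≤ M) :
    y m * T M x y (m - 1) a = x m * T M x y m (a - 1) := by
  rw [yT M x y m a h2, xT M x y m a h1]

lemma yT1 (m : ZMod M) (hM : 1 ≤ M) :
    y m * T M x y (m - 1) 1 = y (m + 1) * T M x y m 1 := by
  rw [yT M x y m 1 hM, T]
  simp only [Ico_self, prod_empty, one_mul, Nat.sub_self, range_zero]
  rw [← Finset.Ico_add_one_right_eq_Icc (a := 1), prod_eq_prod_Ico_succ_bot (by omega : 1 < M + 1),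
    Finset.Ico_add_one_right_eq_Icc]
  norm_num

lemma xT' (m : ZMod M) (a : ℕ) (h1 : 1 ≤ a) (h2 : a ≤ M - 1) (hM : 1 ≤ M) :
    x (m + 1) * T M x y (m + 1) a = y (m + 1) * T M x y m (a + 1) := by
  rw [T, shift3, shift4, T]
  simp only [← Finset.Ico_add_one_right_eq_Icc]
  rw [Finset.prod_Ico_succ_top (show a + 2 ≤ M + 1 by omega)]
  rw [prod_eq_prod_Ico_succ_bot (show 1 < a + 1 by omega)]
  have h1 : x (m + ((1 : ℕ) : ZMod M)) = x (m + 1) := by norm_num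
  have hy : y (m + ((M + 1 : ℕ) : ZMod M)) = y (m + 1) := by rw [castM1]
  rw [h1, hy]
  ring

lemma xTM (m : ZMod M) (hM : 1 ≤ M) :
    x (m + 1) * T M x y (m + 1) M = x m * T M x y m M := by
  rw [T, shift3, T]
  rw [Icc_eq_empty (by omega)]
  simp only [prod_empty, mul_one]
  have h1 : x (m + 1) = x (m + ((1 : ℕ) : ZMod M)) := by norm_num
  rw [h1, ← prod_eq_prod_Ico_succ_bot (show 1 < M + 1 by omega)
      (fun i => x (m + (i : ZMod M))), prod_Ico_succ_top hM]
  have hx : x (m + ((M : ℕ) : ZMod M)) = x m := by rw [castM, add_zero]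
  rw [hx]
  ring

end PpolyAux

/-- for `M ≥ 1` and elements `x_m, y_m` (`m ∈ ℤ/Mℤ`) of a commutative
ring, the identity `y_m P_{m-1} + x_{m+1} P_{m+1} = (x_m + y_{m+1}) P_m` holds;
equivalently, the birational map `x'_m = y_m P_{m-1}/P_m`, `y'_m = x_m P_m/P_{m-1}`
satisfies `x'_m y'_m = x_m y_m` and `x'_m + y'_{m+1} = x_m + y_{m+1}`. -/
theorem Ppoly_three_term
    {R : Type*} [CommRing R] (M : ℕ) (hM : 1 ≤ M) (x y : ZMod M → R) :
    ∀ m : ZMod M,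
      y m * Ppoly M x y (m - 1) + x (m + 1) * Ppoly M x y (m + 1)
        = (x m + y (m + 1)) * Ppoly M x y m := by
  intro m
  open Finset PpolyAux in
  rw [Ppoly_eq, Ppoly_eq, Ppoly_eq, Finset.mul_sum, Finset.mul_sum, Finset.mul_sum]
  -- rewrite the first sum
  have hIcc : Finset.Icc 1 M = Finset.Ico 1 (M + 1) := (Finset.Ico_add_one_right_eq_Icc 1 M).symm
  rw [hIcc]
  rw [Finset.sum_eq_sum_Ico_succ_bot (by omega : 1 < M + 1)
      (fun a => y m * T M x y (m - 1) a),
    Finset.sum_Ico_succ_top hM (fun a => x (m + 1) * T M x y (m + 1) a)]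
  have e1 : ∑ a ∈ Finset.Ico 2 (M + 1), y m * T M x y (m - 1) a
      = ∑ a ∈ Finset.Ico 2 (M + 1), x m * T M x y m (a - 1) := by
    refine Finset.sum_congr rfl fun a ha => ?_
    rw [Finset.mem_Ico] at ha
    exact yT_xT M x y m a ha.1 (by omega)
  have e2 : ∑ a ∈ Finset.Ico 1 M, x (m + 1) * T M x y (m + 1) a
      = ∑ a ∈ Finset.Ico 1 M, y (m + 1) * T M x y m (a + 1) := by
    refine Finset.sum_congr rfl fun a ha => ?_
    rw [Finset.mem_Ico] at ha
    exact xT' M x y m a ha.1 (by omega) hM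
  rw [e1, e2, yT1 M x y m hM, xTM M x y m hM]
  -- reindex the shifted sums
  have r1 : ∑ a ∈ Finset.Ico 2 (M + 1), x m * T M x y m (a - 1)
      = ∑ a ∈ Finset.Ico 1 M, x m * T M x y m a := by
    rw [Finset.sum_Ico_eq_sum_range, Finset.sum_Ico_eq_sum_range]
    have h : M + 1 - 2 = M - 1 := by omega
    rw [h]
    exact Finset.sum_congr rfl fun j _ => by norm_num
  have r2 : ∑ a ∈ Finset.Ico 1 M, y (m + 1) * T M x y m (a + 1)
      = ∑ a ∈ Finset.Ico 2 (M + 1), y (m + 1) * T M x y m a := by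
    rw [Finset.sum_Ico_eq_sum_range, Finset.sum_Ico_eq_sum_range]
    have h : M + 1 - 2 = M - 1 := by omega
    rw [h]
    exact Finset.sum_congr rfl fun j _ => by rw [show 1 + j + 1 = 2 + j from by omega]
  rw [r1, r2]
  -- now split the RHS sum both at the top and at the bottom
  have s1 : ∑ a ∈ Finset.Ico 1 (M + 1), (x m + y (m + 1)) * T M x y m a
      = (∑ a ∈ Finset.Ico 1 M, x m * T M x y m a) + x m * T M x y m M
        + (y (m + 1) * T M x y m 1
          + ∑ a ∈ Finset.Ico 2 (M + 1), y (m + 1) * T M x y m a) := by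
    have t1 : ∑ a ∈ Finset.Ico 1 (M + 1), x m * T M x y m a
        = (∑ a ∈ Finset.Ico 1 M, x m * T M x y m a) + x m * T M x y m M :=
      Finset.sum_Ico_succ_top hM _
    have t2 : ∑ a ∈ Finset.Ico 1 (M + 1), y (m + 1) * T M x y m a
        = y (m + 1) * T M x y m 1
          + ∑ a ∈ Finset.Ico 2 (M + 1), y (m + 1) * T M x y m a :=
      Finset.sum_eq_sum_Ico_succ_bot (by omega) _
    calc ∑ a ∈ Finset.Ico 1 (M + 1), (x m + y (m + 1)) * T M x y m a
        = (∑ a ∈ Finset.Ico 1 (M + 1), x m * T M x y m a)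
            + ∑ a ∈ Finset.Ico 1 (M + 1), y (m + 1) * T M x y m a := by
          rw [← Finset.sum_add_distrib]
          exact Finset.sum_congr rfl fun a _ => by ring
      _ = _ := by rw [t1, t2]
  rw [s1]
  ring
end

section
/- Let M, N ≥ 1, let L = lcm(M, N), and let x_{m,n}, y_{m,n} (indexed by (m,n) ∈ ℤ/Mℤ × ℤ/Nℤ) be elements of a commutative ring. Define P_{m,n} = Σ_{a=1}^{L} (Π_{i=1}^{a-1} x_{m+i,n-i}) (Π_{i=a+1}^{L} y_{m+i,n-i}), with the first index modulo M and the second modulo N. Then for every (m,n), the identity y_{m,n} P_{m-1,n+1} + x_{m+1,n-1} P_{m+1,n-1} = (x_{m,n} + y_{m+1,n-1}) P_{m,n} holds; equivalently, the birational map x'_{m,n} = y_{m,n} P_{m-1,n+1}/P_{m,n}, y'_{m,n} = x_{m,n} P_{m,n}/P_{m-1,n+1} satisfies x'_{m,n} y'_{m,n} = x_{m,n} y_{m,n} and x'_{m,n} + y'_{m+1,n-1} = x_{m,n} + y_{m+1,n-1}. -/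
open Finset in
private lemma Ppoly2_prodIccShift' {R : Type*} [CommRing R] (f : ℕ → R) (a b : ℕ) :
    ∏ i ∈ Icc a b, f (i + 1) = ∏ i ∈ Icc (a + 1) (b + 1), f i := by
  rw [← Finset.Ico_add_one_right_eq_Icc, ← Finset.Ico_add_one_right_eq_Icc, prod_Ico_add' f a (b+1) 1]

open Finset in
private lemma Ppoly2_prodIcoShift' {R : Type*} [CommRing R] (f : ℕ → R) (a b : ℕ) :
    ∏ i ∈ Ico a b, f (i + 1) = ∏ i ∈ Ico (a + 1) (b + 1), f i := by
  rw [prod_Ico_add' f a b 1]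

open Finset in
private lemma Ppoly2_sumIccShift' {R : Type*} [CommRing R] (f : ℕ → R) (a b : ℕ) :
    ∑ i ∈ Icc a b, f (i + 1) = ∑ i ∈ Icc (a + 1) (b + 1), f i := by
  rw [← Finset.Ico_add_one_right_eq_Icc, ← Finset.Ico_add_one_right_eq_Icc, sum_Ico_add' f a (b+1) 1]

open Finset in
private lemma Ppoly2_claimA {R : Type*} [CommRing R] (K : ℕ) (u v : ℕ → R)
    (hu0 : u 0 = u (K+1)) :
    v (K+1) * ∑ a ∈ Icc 1 (K+1), (∏ i ∈ Ico 1 a, u (i-1)) * ∏ i ∈ Icc (a+1) (K+1), v (i-1)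
      = (∏ i ∈ Icc 1 (K+1), v i)
        + u (K+1) * ∑ b ∈ Icc 1 K, (∏ i ∈ Ico 1 b, u i) * ∏ i ∈ Icc (b+1) (K+1), v i := by
  have hsplit : ∑ a ∈ Icc 1 (K+1), (∏ i ∈ Ico 1 a, u (i-1)) * ∏ i ∈ Icc (a+1) (K+1), v (i-1)
      = (∏ i ∈ Ico 1 1, u (i-1)) * (∏ i ∈ Icc 2 (K+1), v (i-1))
        + ∑ a ∈ Icc 2 (K+1), (∏ i ∈ Ico 1 a, u (i-1)) * ∏ i ∈ Icc (a+1) (K+1), v (i-1) := by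
    rw [← Finset.Ico_add_one_right_eq_Icc, Finset.sum_eq_sum_Ico_succ_bot (by omega)]
    simp [Finset.Ico_add_one_right_eq_Icc]
  rw [hsplit,
    ← Ppoly2_sumIccShift' (fun a => (∏ i ∈ Ico 1 a, u (i-1)) * ∏ i ∈ Icc (a+1) (K+1), v (i-1)) 1 K]
  have h1 : ∏ i ∈ Icc 2 (K+1), v (i-1) = ∏ i ∈ Icc 1 K, v i := by
    rw [← Ppoly2_prodIccShift' (fun i => v (i-1)) 1 K]; simp
  have h2 : ∀ b ∈ Icc 1 K,
      v (K+1) * ((∏ i ∈ Ico 1 (b+1), u (i-1)) * ∏ i ∈ Icc (b+1+1) (K+1), v (i-1))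
        = u (K+1) * ((∏ i ∈ Ico 1 b, u i) * ∏ i ∈ Icc (b+1) (K+1), v i) := by
    intro b hb
    obtain ⟨hb1, hb2⟩ := mem_Icc.mp hb
    have hA : ∏ i ∈ Ico 1 (b+1), u (i-1) = u 0 * ∏ i ∈ Ico 1 b, u i := by
      rw [← Ppoly2_prodIcoShift' (fun i => u (i-1)) 0 b]
      simp only [Nat.add_sub_cancel]
      exact Finset.prod_eq_prod_Ico_succ_bot (by omega) u
    have hB : ∏ i ∈ Icc (b+1+1) (K+1), v (i-1) = ∏ i ∈ Icc (b+1) K, v i := by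
      rw [← Ppoly2_prodIccShift' (fun i => v (i-1)) (b+1) K]; simp
    rw [hA, hB, hu0, prod_Icc_succ_top (show b+1 ≤ K+1 by omega) v]
    ring
  rw [mul_add, Finset.mul_sum, Finset.sum_congr rfl h2, Ico_self, prod_empty, one_mul, h1,
    ← Finset.mul_sum, prod_Icc_succ_top (show (1:ℕ) ≤ K+1 by omega) v]
  ring

open Finset in
private lemma Ppoly2_claimB {R : Type*} [CommRing R] (K : ℕ) (u v : ℕ → R)
    (hv : v (K+1+1) = v 1) :
    u 1 * ∑ a ∈ Icc 1 (K+1), (∏ i ∈ Ico 1 a, u (i+1)) * ∏ i ∈ Icc (a+1) (K+1), v (i+1)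
      = (∏ i ∈ Icc 1 (K+1), u i)
        + v 1 * ∑ b ∈ Icc 2 (K+1), (∏ i ∈ Ico 1 b, u i) * ∏ i ∈ Icc (b+1) (K+1), v i := by
  rw [Finset.sum_Icc_succ_top (show (1:ℕ) ≤ K+1 by omega)]
  have htop : (∏ i ∈ Ico 1 (K+1), u (i+1)) * ∏ i ∈ Icc (K+1+1) (K+1), v (i+1)
      = ∏ i ∈ Ico 2 (K+2), u i := by
    rw [Finset.Icc_eq_empty (by omega), prod_empty, mul_one, Ppoly2_prodIcoShift' u 1 (K+1)]
  have h2 : ∀ a ∈ Icc 1 K,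
      u 1 * ((∏ i ∈ Ico 1 a, u (i+1)) * ∏ i ∈ Icc (a+1) (K+1), v (i+1))
        = v 1 * ((∏ i ∈ Ico 1 (a+1), u i) * ∏ i ∈ Icc (a+1+1) (K+1), v i) := by
    intro a ha
    obtain ⟨ha1, ha2⟩ := mem_Icc.mp ha
    rw [Ppoly2_prodIcoShift' u 1 a, Ppoly2_prodIccShift' v (a+1) (K+1),
      prod_Icc_succ_top (show a+1+1 ≤ K+1+1 by omega) v, hv,
      Finset.prod_eq_prod_Ico_succ_bot (show 1 < a+1 by omega) u]
    ring
  rw [mul_add, htop, Finset.mul_sum, Finset.sum_congr rfl h2, ← Finset.mul_sum,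
    Ppoly2_sumIccShift' (fun b => (∏ i ∈ Ico 1 b, u i) * ∏ i ∈ Icc (b+1) (K+1), v i) 1 K,
    ← Finset.prod_eq_prod_Ico_succ_bot (show 1 < K+2 by omega) u,
    show Ico 1 (K+2) = Icc 1 (K+1) from Finset.Ico_add_one_right_eq_Icc 1 (K+1)]
  ring

open Finset in
private lemma Ppoly2_key {R : Type*} [CommRing R] (L : ℕ) (hL : 1 ≤ L) (u v : ℕ → R)
    (hu0 : u 0 = u L) (hv : v (L+1) = v 1) :
    v L * (∑ a ∈ Icc 1 L, (∏ i ∈ Ico 1 a, u (i-1)) * ∏ i ∈ Icc (a+1) L, v (i-1))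
      + u 1 * (∑ a ∈ Icc 1 L, (∏ i ∈ Ico 1 a, u (i+1)) * ∏ i ∈ Icc (a+1) L, v (i+1))
    = (u L + v 1) * ∑ a ∈ Icc 1 L, (∏ i ∈ Ico 1 a, u i) * ∏ i ∈ Icc (a+1) L, v i := by
  obtain ⟨K, rfl⟩ : ∃ K, L = K + 1 := ⟨L - 1, by omega⟩
  rw [Ppoly2_claimA K u v hu0, Ppoly2_claimB K u v hv]
  have hTop : ∑ a ∈ Icc 1 (K+1), (∏ i ∈ Ico 1 a, u i) * ∏ i ∈ Icc (a+1) (K+1), v i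
      = (∑ a ∈ Icc 1 K, (∏ i ∈ Ico 1 a, u i) * ∏ i ∈ Icc (a+1) (K+1), v i)
        + (∏ i ∈ Ico 1 (K+1), u i) * ∏ i ∈ Icc (K+1+1) (K+1), v i :=
    Finset.sum_Icc_succ_top (by omega) _
  have hBot : ∑ a ∈ Icc 1 (K+1), (∏ i ∈ Ico 1 a, u i) * ∏ i ∈ Icc (a+1) (K+1), v i
      = (∏ i ∈ Ico 1 1, u i) * ∏ i ∈ Icc 2 (K+1), v i
        + ∑ a ∈ Icc 2 (K+1), (∏ i ∈ Ico 1 a, u i) * ∏ i ∈ Icc (a+1) (K+1), v i := by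
    rw [← Finset.Ico_add_one_right_eq_Icc, Finset.sum_eq_sum_Ico_succ_bot (by omega)]
    simp [Finset.Ico_add_one_right_eq_Icc]
  have hTtop : u (K+1) * ((∏ i ∈ Ico 1 (K+1), u i) * ∏ i ∈ Icc (K+1+1) (K+1), v i)
      = ∏ i ∈ Icc 1 (K+1), u i := by
    rw [Finset.Icc_eq_empty (show ¬ (K+1+1 ≤ K+1) by omega), prod_empty, mul_one,
      show Icc 1 (K+1) = Ico 1 (K+1+1) from (Finset.Ico_add_one_right_eq_Icc 1 (K+1)).symm,
      prod_Ico_succ_top (show (1:ℕ) ≤ K+1 by omega)]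
    ring
  have hT1 : v 1 * ((∏ i ∈ Ico 1 1, u i) * ∏ i ∈ Icc 2 (K+1), v i)
      = ∏ i ∈ Icc 1 (K+1), v i := by
    rw [Ico_self, prod_empty, one_mul,
      show Icc 1 (K+1) = Ico 1 (K+1+1) from (Finset.Ico_add_one_right_eq_Icc 1 (K+1)).symm,
      Finset.prod_eq_prod_Ico_succ_bot (show 1 < K+1+1 by omega) v]
    simp [Finset.Ico_add_one_right_eq_Icc]
  linear_combination -(u (K+1) * hTop) - v 1 * hBot - hTtop - hT1

/-- `P_{m,n} = ∑_{a=1}^{L} (∏_{i=1}^{a-1} x_{m+i,n-i}) (∏_{i=a+1}^{L} y_{m+i,n-i})`,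
where `L = lcm(M,N)`, first index modulo `M`, second modulo `N`. -/
def Ppoly2 {R : Type*} [CommRing R] (M N : ℕ) (x y : ZMod M → ZMod N → R)
    (m : ZMod M) (n : ZMod N) : R :=
  ∑ a ∈ Finset.Icc 1 (Nat.lcm M N),
    (∏ i ∈ Finset.Ico 1 a, x (m + (i : ZMod M)) (n - (i : ZMod N)))
      * ∏ i ∈ Finset.Icc (a + 1) (Nat.lcm M N), y (m + (i : ZMod M)) (n - (i : ZMod N))

open Finset in
/-- for `M, N ≥ 1`, `L = lcm(M,N)`, and elements `x_{m,n}, y_{m,n}` of a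
commutative ring indexed by `ℤ/Mℤ × ℤ/Nℤ`, the identity
`y_{m,n} P_{m-1,n+1} + x_{m+1,n-1} P_{m+1,n-1} = (x_{m,n} + y_{m+1,n-1}) P_{m,n}` holds;
equivalently, the birational map `x'_{m,n} = y_{m,n} P_{m-1,n+1}/P_{m,n}`,
`y'_{m,n} = x_{m,n} P_{m,n}/P_{m-1,n+1}` satisfies `x'_{m,n} y'_{m,n} = x_{m,n} y_{m,n}`
and `x'_{m,n} + y'_{m+1,n-1} = x_{m,n} + y_{m+1,n-1}`. -/
theorem Ppoly2_three_term
    {R : Type*} [CommRing R] (M N : ℕ) (hM : 1 ≤ M) (hN : 1 ≤ N)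
    (x y : ZMod M → ZMod N → R) :
    ∀ (m : ZMod M) (n : ZMod N),
      y m n * Ppoly2 M N x y (m - 1) (n + 1)
          + x (m + 1) (n - 1) * Ppoly2 M N x y (m + 1) (n - 1)
        = (x m n + y (m + 1) (n - 1)) * Ppoly2 M N x y m n := by
  intro m n
  have hL : 1 ≤ Nat.lcm M N := Nat.lcm_pos hM hN
  have hML : ((Nat.lcm M N : ℕ) : ZMod M) = 0 :=
    (ZMod.natCast_eq_zero_iff _ _).mpr (Nat.dvd_lcm_left M N)
  have hNL : ((Nat.lcm M N : ℕ) : ZMod N) = 0 :=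
    (ZMod.natCast_eq_zero_iff _ _).mpr (Nat.dvd_lcm_right M N)
  have e1 : Ppoly2 M N x y (m - 1) (n + 1)
      = ∑ a ∈ Icc 1 (Nat.lcm M N),
          (∏ i ∈ Ico 1 a, x (m + ((i-1 : ℕ) : ZMod M)) (n - ((i-1 : ℕ) : ZMod N)))
            * ∏ i ∈ Icc (a+1) (Nat.lcm M N),
                y (m + ((i-1 : ℕ) : ZMod M)) (n - ((i-1 : ℕ) : ZMod N)) := by
    refine Finset.sum_congr rfl fun a ha => ?_
    have ha1 : 1 ≤ a := (mem_Icc.mp ha).1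
    refine congrArg₂ (· * ·) (Finset.prod_congr rfl fun i hi => ?_)
      (Finset.prod_congr rfl fun i hi => ?_)
    · have h1 : 1 ≤ i := (mem_Ico.mp hi).1
      rw [Nat.cast_sub h1, Nat.cast_sub h1]
      congr 1 <;> push_cast <;> ring
    · have h1 : 1 ≤ i := by have := (mem_Icc.mp hi).1; omega
      rw [Nat.cast_sub h1, Nat.cast_sub h1]
      congr 1 <;> push_cast <;> ring
  have e2 : Ppoly2 M N x y (m + 1) (n - 1)
      = ∑ a ∈ Icc 1 (Nat.lcm M N),
          (∏ i ∈ Ico 1 a, x (m + ((i+1 : ℕ) : ZMod M)) (n - ((i+1 : ℕ) : ZMod N)))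
            * ∏ i ∈ Icc (a+1) (Nat.lcm M N),
                y (m + ((i+1 : ℕ) : ZMod M)) (n - ((i+1 : ℕ) : ZMod N)) := by
    refine Finset.sum_congr rfl fun a ha => ?_
    refine congrArg₂ (· * ·) (Finset.prod_congr rfl fun i hi => ?_)
      (Finset.prod_congr rfl fun i hi => ?_) <;>
    · congr 1 <;> push_cast <;> ring
  have hyL : y m n
      = y (m + ((Nat.lcm M N : ℕ) : ZMod M)) (n - ((Nat.lcm M N : ℕ) : ZMod N)) := by
    rw [hML, hNL]; simp
  have hxL : x m n
      = x (m + ((Nat.lcm M N : ℕ) : ZMod M)) (n - ((Nat.lcm M N : ℕ) : ZMod N)) := by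
    rw [hML, hNL]; simp
  have hx1 : x (m + 1) (n - 1) = x (m + ((1:ℕ) : ZMod M)) (n - ((1:ℕ) : ZMod N)) := by
    push_cast; rfl
  have hy1 : y (m + 1) (n - 1) = y (m + ((1:ℕ) : ZMod M)) (n - ((1:ℕ) : ZMod N)) := by
    push_cast; rfl
  have hu0 : x (m + ((0:ℕ) : ZMod M)) (n - ((0:ℕ) : ZMod N))
      = x (m + ((Nat.lcm M N : ℕ) : ZMod M)) (n - ((Nat.lcm M N : ℕ) : ZMod N)) := by
    rw [hML, hNL]; simp
  have hv1 : y (m + ((Nat.lcm M N + 1 : ℕ) : ZMod M)) (n - ((Nat.lcm M N + 1 : ℕ) : ZMod N))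
      = y (m + ((1:ℕ) : ZMod M)) (n - ((1:ℕ) : ZMod N)) := by
    push_cast [hML, hNL]; norm_num
  have h := Ppoly2_key (R := R) (Nat.lcm M N) hL
      (fun i : ℕ => x (m + (i : ZMod M)) (n - (i : ZMod N)))
      (fun i : ℕ => y (m + (i : ZMod M)) (n - (i : ZMod N))) hu0 hv1
  rw [e1, e2, hyL, hx1, hxL, hy1, show Ppoly2 M N x y m n
    = ∑ a ∈ Icc 1 (Nat.lcm M N), (∏ i ∈ Ico 1 a, x (m + (i : ZMod M)) (n - (i : ZMod N)))
        * ∏ i ∈ Icc (a+1) (Nat.lcm M N), y (m + (i : ZMod M)) (n - (i : ZMod N)) from rfl]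
  exact h
end

section
/- Let I = {1,2}, J = {-1,-2}, so t = (t_1, t_2, t_{-1}, t_{-2}) with all coordinates nonzero, and fix q ∈ ℂ*. Let w_{m,n} be nowhere-vanishing functions of t satisfying, for all i ≠ j in {1,2,-1,-2} and all (m,n) ∈ ℤ², the w-equation T_i T_j(w_{m,n}) = (T_i(w_{m,n+1}) T_j(w_{m,n+1}) / w_{m+1,n+1}) · (t_i T_j(w_{m+1,n}) − t_j T_i(w_{m+1,n})) / (t_i T_j(w_{m,n+1}) − t_j T_i(w_{m,n+1})) (denominators assumed nonzero), together with the homogeneity relation T_1 T_2(w_{m,n}) = c_{m,n} T_{-1} T_{-2}(w_{m,n}) for nonzero constants c_{m,n}. Define f_{m,n} = T_1(w_{m,n})/T_{-1}(w_{m,n}) and g_{m,n} = T_1 T_{-1}(w_{m,n}) / T_{-1} T_{-2}(w_{m,n}). Then, wherever the denominators are nonzero, T_1 T_2(f_{m,n}) / f_{m+1,n+1} = (c_{m,n}/c_{m,n+1}) · (g_{m+1,n} − t_1/t_{-2})(g_{m,n+1} − c_{m,n+1} t_{-1}/t_2) / ((g_{m,n+1} − t_1/t_{-2})(g_{m+1,n}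 − c_{m+1,n} t_{-1}/t_2)). -/
/-- The `w`-equation for the pair `(i,j)` at the lattice site `(m,n)` and point `t`. -/
def Weq (q : ℂ) (w : ℤ → ℤ → (ℤ → ℂ) → ℂ) (i j m n : ℤ) (t : ℤ → ℂ) : Prop :=
  w m n (Tshift q i (Tshift q j t))
    = w m (n + 1) (Tshift q i t) * w m (n + 1) (Tshift q j t) / w (m + 1) (n + 1) t
      * (t i * w (m + 1) n (Tshift q j t) - t j * w (m + 1) n (Tshift q i t))
      / (t i * w m (n + 1) (Tshift q j t) - t j * w m (n + 1) (Tshift q i t))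

/-- `f_{m,n} = T_1(w_{m,n}) / T_{-1}(w_{m,n})`. -/
noncomputable def fVar (q : ℂ) (w : ℤ → ℤ → (ℤ → ℂ) → ℂ) (m n : ℤ) (t : ℤ → ℂ) : ℂ :=
  w m n (Tshift q 1 t) / w m n (Tshift q (-1) t)

/-- `g_{m,n} = T_1 T_{-1}(w_{m,n}) / T_{-1} T_{-2}(w_{m,n})`. -/
noncomputable def gVar (q : ℂ) (w : ℤ → ℤ → (ℤ → ℂ) → ℂ) (m n : ℤ) (t : ℤ → ℂ) : ℂ :=
  w m n (Tshift q 1 (Tshift q (-1) t)) / w m n (Tshift q (-1) (Tshift q (-2) t))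

/-! After the homogeneity relation, `T_1(T_1T_2 w_{m,n})` is `c_{m,n}` times the double shift
`T_{-2}T_1 w_{m,n}` at `T_{-1}t`, while `T_{-1}(T_1T_2 w_{m,n})` is the double shift `T_2T_{-1} w_{m,n}`
at `T_1t`. The `w`-equations for the pairs `(-2, 1)` and `(2, -1)`, divided through by the values of
`w` at `T_i t`, express both in terms of `g_{m,n+1}` and `g_{m+1,n}` (homogeneity turns the `T_1T_2`
values appearing in the second one into `c · T_{-1}T_{-2}` values). In the quotient all remaining
values of `w` cancel except `T_1 w_{m+1,n+1} / T_{-1} w_{m+1,n+1} = f_{m+1,n+1}`. -/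

lemma Tshift_apply_ne (q : ℂ) (i : ℤ) (t : ℤ → ℂ) {l : ℤ} (h : l ≠ i) :
    Tshift q i t l = t l :=
  Function.update_of_ne h _ _

lemma Tshift_comm_s14 (q : ℂ) {i j : ℤ} (h : i ≠ j) (t : ℤ → ℂ) :
    Tshift q i (Tshift q j t) = Tshift q j (Tshift q i t) := by
  funext l
  simp only [Tshift, Function.update_apply]
  split_ifs <;> simp_all

lemma Weq.eq_ratio_form {q : ℂ} {w : ℤ → ℤ → (ℤ → ℂ) → ℂ} {i j m n : ℤ} {t : ℤ → ℂ}
    (h : Weq q w i j m n t) (hti : t i ≠ 0) (hw₁ : w m (n + 1) (Tshift q i t) ≠ 0)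
    (hw₂ : w (m + 1) n (Tshift q i t) ≠ 0) :
    w m n (Tshift q i (Tshift q j t))
      = w m (n + 1) (Tshift q j t) * w (m + 1) n (Tshift q i t) / w (m + 1) (n + 1) t
        * (w (m + 1) n (Tshift q j t) / w (m + 1) n (Tshift q i t) - t j / t i)
        / (w m (n + 1) (Tshift q j t) / w m (n + 1) (Tshift q i t) - t j / t i) := by
  rw [h]
  field_simp

section Evolution

variable {q : ℂ} {w : ℤ → ℤ → (ℤ → ℂ) → ℂ} {c : ℤ → ℤ → ℂ} {m n : ℤ} {t : ℤ → ℂ}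

lemma w_T1_T1T2_eq (hq : q ≠ 0) (hw : ∀ m n : ℤ, ∀ t : ℤ → ℂ, (∀ l, t l ≠ 0) → w m n t ≠ 0)
    (ht : ∀ l, t l ≠ 0)
    (hhom : w m n (Tshift q 1 (Tshift q 2 (Tshift q 1 t)))
      = c m n * w m n (Tshift q (-1) (Tshift q (-2) (Tshift q 1 t))))
    (hweq : Weq q w (-2) 1 m n (Tshift q (-1) t)) :
    w m n (Tshift q 1 (Tshift q 1 (Tshift q 2 t)))
      = c m n * (w m (n + 1) (Tshift q 1 (Tshift q (-1) t))
          * w (m + 1) n (Tshift q (-1) (Tshift q (-2) t)) / w (m + 1) (n + 1) (Tshift q (-1) t)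
          * (gVar q w (m + 1) n t - t 1 / t (-2)) / (gVar q w m (n + 1) t - t 1 / t (-2))) := by
  have hs := Tshift_ne_zero hq (-2) (Tshift_ne_zero hq (-1) ht)
  rw [Tshift_comm_s14 q (show (1 : ℤ) ≠ 2 by decide) t, hhom,
    Tshift_comm_s14 q (show (-2 : ℤ) ≠ 1 by decide) t,
    Tshift_comm_s14 q (show (-1 : ℤ) ≠ 1 by decide) (Tshift q (-2) t),
    Tshift_comm_s14 q (show (-1 : ℤ) ≠ -2 by decide) t,
    ← Tshift_comm_s14 q (show (-2 : ℤ) ≠ 1 by decide),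
    hweq.eq_ratio_form (Tshift_ne_zero hq _ ht _) (hw _ _ _ hs) (hw _ _ _ hs),
    Tshift_apply_ne q (-1) t (show (1 : ℤ) ≠ -1 by decide),
    Tshift_apply_ne q (-1) t (show (-2 : ℤ) ≠ -1 by decide),
    Tshift_comm_s14 q (show (-2 : ℤ) ≠ -1 by decide) t, gVar, gVar]

lemma w_Tm1_T1T2_eq (hq : q ≠ 0) (hw : ∀ m n : ℤ, ∀ t : ℤ → ℂ, (∀ l, t l ≠ 0) → w m n t ≠ 0)
    (ht : ∀ l, t l ≠ 0)
    (hhom : ∀ m n : ℤ,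
      w m n (Tshift q 1 (Tshift q 2 t)) = c m n * w m n (Tshift q (-1) (Tshift q (-2) t)))
    (hweq : Weq q w 2 (-1) m n (Tshift q 1 t)) :
    w m n (Tshift q (-1) (Tshift q 1 (Tshift q 2 t)))
      = w m (n + 1) (Tshift q 1 (Tshift q (-1) t))
          * (c (m + 1) n * w (m + 1) n (Tshift q (-1) (Tshift q (-2) t)))
          / w (m + 1) (n + 1) (Tshift q 1 t)
          * (gVar q w (m + 1) n t / c (m + 1) n - t (-1) / t 2)
          / (gVar q w m (n + 1) t / c m (n + 1) - t (-1) / t 2) := by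
  have hs := Tshift_ne_zero hq 2 (Tshift_ne_zero hq 1 ht)
  rw [Tshift_comm_s14 q (show (1 : ℤ) ≠ 2 by decide) t,
    Tshift_comm_s14 q (show (-1 : ℤ) ≠ 2 by decide),
    hweq.eq_ratio_form (Tshift_ne_zero hq _ ht _) (hw _ _ _ hs) (hw _ _ _ hs),
    Tshift_apply_ne q 1 t (show (2 : ℤ) ≠ 1 by decide),
    Tshift_apply_ne q 1 t (show (-1 : ℤ) ≠ 1 by decide),
    Tshift_comm_s14 q (show (-1 : ℤ) ≠ 1 by decide) t,
    Tshift_comm_s14 q (show (2 : ℤ) ≠ 1 by decide) t, hhom, hhom, gVar, gVar,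
    div_mul_eq_div_div_swap, div_mul_eq_div_div_swap]

end Evolution

theorem qp6_f_evolution_general
    (q : ℂ) (hq : q ≠ 0)
    (w : ℤ → ℤ → (ℤ → ℂ) → ℂ)
    (hw : ∀ m n : ℤ, ∀ t : ℤ → ℂ, (∀ l, t l ≠ 0) → w m n t ≠ 0)
    (hweq : ∀ i ∈ ({1, 2, -1, -2} : Finset ℤ), ∀ j ∈ ({1, 2, -1, -2} : Finset ℤ),
      i ≠ j → ∀ m n : ℤ, ∀ t : ℤ → ℂ, (∀ l, t l ≠ 0) → Weq q w i j m n t)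
    (c : ℤ → ℤ → ℂ) (hc : ∀ m n : ℤ, c m n ≠ 0)
    (hhom : ∀ m n : ℤ, ∀ t : ℤ → ℂ, (∀ l, t l ≠ 0) →
      w m n (Tshift q 1 (Tshift q 2 t)) = c m n * w m n (Tshift q (-1) (Tshift q (-2) t)))
    (m n : ℤ) (t : ℤ → ℂ) (ht : ∀ l, t l ≠ 0) :
    fVar q w m n (Tshift q 1 (Tshift q 2 t)) / fVar q w (m + 1) (n + 1) t
      = c m n / c m (n + 1)
        * ((gVar q w (m + 1) n t - t 1 / t (-2))
            * (gVar q w m (n + 1) t - c m (n + 1) * (t (-1) / t 2)))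
        / ((gVar q w m (n + 1) t - t 1 / t (-2))
            * (gVar q w (m + 1) n t - c (m + 1) n * (t (-1) / t 2))) := by
  have hs : ∀ i, ∀ l, Tshift q i t l ≠ 0 := fun i => Tshift_ne_zero hq i ht
  have hw₁ : ∀ k l i, w k l (Tshift q i t) ≠ 0 := fun k l i => hw k l _ (hs i)
  have hw₂ : ∀ k l i j, w k l (Tshift q i (Tshift q j t)) ≠ 0 :=
    fun k l i j => hw k l _ (Tshift_ne_zero hq i (hs j))
  rw [fVar, fVar, w_T1_T1T2_eq hq hw ht (hhom m n _ (hs 1))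
      (hweq (-2) (by decide) 1 (by decide) (by decide) m n _ (hs (-1))),
    w_Tm1_T1T2_eq hq hw ht (fun k l => hhom k l t ht)
      (hweq 2 (by decide) (-1) (by decide) (by decide) m n _ (hs 1))]
  field_simp [hw₁, hw₂, hc]

/-- first half of the birational time evolution `T = T_1 T_2` of the
similarity-reduced lattice `q`-UC hierarchy (`I = {1,2}`, `J = {-1,-2}`):
`T_1T_2(f_{m,n}) / f_{m+1,n+1} = (c_{m,n}/c_{m,n+1})
· (g_{m+1,n} − t_1/t_{-2})(g_{m,n+1} − c_{m,n+1} t_{-1}/t_2)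
/ ((g_{m,n+1} − t_1/t_{-2})(g_{m+1,n} − c_{m+1,n} t_{-1}/t_2))`
wherever denominators are nonzero. -/
theorem qp6_f_evolution
    (q : ℂ) (hq : q ≠ 0)
    (w : ℤ → ℤ → (ℤ → ℂ) → ℂ)
    (hw : ∀ m n : ℤ, ∀ t : ℤ → ℂ, (∀ l, t l ≠ 0) → w m n t ≠ 0)
    (hden : ∀ i ∈ ({1, 2, -1, -2} : Finset ℤ), ∀ j ∈ ({1, 2, -1, -2} : Finset ℤ),
      i ≠ j → ∀ m n : ℤ, ∀ t : ℤ → ℂ, (∀ l, t l ≠ 0) →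
        t i * w m (n + 1) (Tshift q j t) - t j * w m (n + 1) (Tshift q i t) ≠ 0)
    (hweq : ∀ i ∈ ({1, 2, -1, -2} : Finset ℤ), ∀ j ∈ ({1, 2, -1, -2} : Finset ℤ),
      i ≠ j → ∀ m n : ℤ, ∀ t : ℤ → ℂ, (∀ l, t l ≠ 0) → Weq q w i j m n t)
    (c : ℤ → ℤ → ℂ) (hc : ∀ m n : ℤ, c m n ≠ 0)
    (hhom : ∀ m n : ℤ, ∀ t : ℤ → ℂ, (∀ l, t l ≠ 0) →
      w m n (Tshift q 1 (Tshift q 2 t)) = c m n * w m n (Tshift q (-1) (Tshift q (-2) t)))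
    (m n : ℤ) (t : ℤ → ℂ) (ht : ∀ l, t l ≠ 0)
    (h1 : fVar q w (m + 1) (n + 1) t ≠ 0)
    (h2 : gVar q w m (n + 1) t - t 1 / t (-2) ≠ 0)
    (h3 : gVar q w (m + 1) n t - c (m + 1) n * (t (-1) / t 2) ≠ 0) :
    fVar q w m n (Tshift q 1 (Tshift q 2 t)) / fVar q w (m + 1) (n + 1) t
      = c m n / c m (n + 1)
        * ((gVar q w (m + 1) n t - t 1 / t (-2))
            * (gVar q w m (n + 1) t - c m (n + 1) * (t (-1) / t 2)))
        / ((gVar q w m (n + 1) t - t 1 / t (-2))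
            * (gVar q w (m + 1) n t - c (m + 1) n * (t (-1) / t 2))) :=
  qp6_f_evolution_general q hq w hw hweq c hc hhom m n t ht
end

section
/- Let I = {1,2}, J = {-1,-2}, let M, N ≥ 1 with L = lcm(M, N), and let τ_{m,n} be nowhere-vanishing functions of t = (t_1, t_2, t_{-1}, t_{-2}) satisfying the periodicity τ_{m+M,n} = τ_{m,n+N} = τ_{m,n}. Define w_{m,n} = τ_{m+1,n}/τ_{m,n+1}, f_{m,n} = T_1(w_{m,n})/T_{-1}(w_{m,n}), and g_{m,n} = T_1 T_{-1}(w_{m,n}) / T_{-1} T_{-2}(w_{m,n}). Then for every (m,n) ∈ ℤ², Π_{i=1}^{L} f_{m+i,n-i} = 1 and Π_{i=1}^{L} g_{m+i,n-i} = 1. -/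
/-- `w_{m,n} = τ_{m+1,n} / τ_{m,n+1}`. -/
noncomputable def wOf (τ : ℤ → ℤ → (ℤ → ℂ) → ℂ) (m n : ℤ) (t : ℤ → ℂ) : ℂ :=
  τ (m + 1) n t / τ m (n + 1) t

/-- Telescoping product of ratios. -/
lemma prod_ratio_telescope (F : ℕ → ℂ) (hF : ∀ i, F i ≠ 0) (K : ℕ) :
    (∏ i ∈ Finset.range K, F (i + 1) / F i) = F K / F 0 := by
  induction K with
  | zero => simp [div_self (hF 0)]
  | succ k ih =>
      rw [Finset.prod_range_succ, ih, div_mul_div_comm, mul_comm (F 0) (F k)]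
      exact mul_div_mul_left _ _ (hF k)

/-- Periodicity in `m` for multiples of `M`. -/
lemma perM_mul (τ : ℤ → ℤ → (ℤ → ℂ) → ℂ) (M : ℕ)
    (hperM : ∀ m n : ℤ, ∀ t : ℤ → ℂ, τ (m + (M : ℤ)) n t = τ m n t) :
    ∀ (k : ℕ) (m n : ℤ) (t : ℤ → ℂ), τ (m + ((k * M : ℕ) : ℤ)) n t = τ m n t := by
  intro k
  induction k with
  | zero => intro m n t; simp
  | succ k ih =>
      intro m n t
      have h : (m + (((k + 1) * M : ℕ) : ℤ)) = (m + (M : ℤ)) + ((k * M : ℕ) : ℤ) := by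
        push_cast; ring
      rw [h, ih, hperM]

/-- Periodicity in `n` downward for multiples of `N`. -/
lemma perN_sub (τ : ℤ → ℤ → (ℤ → ℂ) → ℂ) (N : ℕ)
    (hperN : ∀ m n : ℤ, ∀ t : ℤ → ℂ, τ m (n + (N : ℤ)) t = τ m n t) :
    ∀ (k : ℕ) (m n : ℤ) (t : ℤ → ℂ), τ m (n - ((k * N : ℕ) : ℤ)) t = τ m n t := by
  have hsub : ∀ (m n : ℤ) (t : ℤ → ℂ), τ m (n - (N : ℤ)) t = τ m n t := by
    intro m n t
    have := hperN m (n - (N : ℤ)) t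
    rw [sub_add_cancel] at this
    exact this.symm
  intro k
  induction k with
  | zero => intro m n t; simp
  | succ k ih =>
      intro m n t
      have h : (n - (((k + 1) * N : ℕ) : ℤ)) = (n - ((k * N : ℕ) : ℤ)) - (N : ℤ) := by
        push_cast; ring
      rw [h, hsub, ih]

/-- The product of `w` along the antidiagonal of length `lcm M N` is 1 for any argument. -/
lemma wprod_eq_one (τ : ℤ → ℤ → (ℤ → ℂ) → ℂ) (M N : ℕ)
    (hτ : ∀ m n : ℤ, ∀ t : ℤ → ℂ, τ m n t ≠ 0)
    (hperM : ∀ m n : ℤ, ∀ t : ℤ → ℂ, τ (m + (M : ℤ)) n t = τ m n t)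
    (hperN : ∀ m n : ℤ, ∀ t : ℤ → ℂ, τ m (n + (N : ℤ)) t = τ m n t)
    (m n : ℤ) (s : ℤ → ℂ) :
    (∏ i ∈ Finset.range (Nat.lcm M N),
        wOf τ (m + (i : ℤ) + 1) (n - (i : ℤ) - 1) s) = 1 := by
  set L := Nat.lcm M N with hL
  set F : ℕ → ℂ := fun i => τ (m + 1 + (i : ℤ)) (n - (i : ℤ)) s with hF
  have hFne : ∀ i, F i ≠ 0 := fun i => hτ _ _ _
  have hstep : ∀ i ∈ Finset.range L,
      wOf τ (m + (i : ℤ) + 1) (n - (i : ℤ) - 1) s = F (i + 1) / F i := by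
    intro i _
    have e1 : (m + (i : ℤ) + 1 + 1) = m + 1 + (((i + 1 : ℕ)) : ℤ) := by push_cast; ring
    have e2 : (n - (i : ℤ) - 1) = n - (((i + 1 : ℕ)) : ℤ) := by push_cast; ring
    have e3 : (m + (i : ℤ) + 1) = m + 1 + (i : ℤ) := by ring
    have e4 : (n - (i : ℤ) - 1 + 1) = n - (i : ℤ) := by ring
    simp only [wOf]
    rw [e1, e4, e2, e3]
  rw [Finset.prod_congr rfl hstep, prod_ratio_telescope F hFne L]
  obtain ⟨a, ha⟩ := Nat.dvd_lcm_left M N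
  obtain ⟨b, hb⟩ := Nat.dvd_lcm_right M N
  have hFL : F L = F 0 := by
    have h1 : F L = τ (m + 1 + ((a * M : ℕ) : ℤ)) ((n - ((b * N : ℕ) : ℤ))) s := by
      simp only [hF]
      congr 2
      · rw [hL, ha]; push_cast; ring
      · rw [hL, hb]; push_cast; ring
    rw [h1, perM_mul τ M hperM, perN_sub τ N hperN]
    simp [hF]
  rw [hFL, div_self (hFne 0)]

/-- for `(M,N)`-periodic nowhere-vanishing `τ_{m,n}` (with `I = {1,2}`,
`J = {-1,-2}`), `w_{m,n} = τ_{m+1,n}/τ_{m,n+1}`, and `L = lcm(M,N)`, the conserved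
quantities hold: `∏_{i=1}^{L} f_{m+i,n-i} = 1` and `∏_{i=1}^{L} g_{m+i,n-i} = 1`. -/
theorem qp6_conserved_quantities
    (q : ℂ) (hq : q ≠ 0) (M N : ℕ) (hM : 1 ≤ M) (hN : 1 ≤ N)
    (τ : ℤ → ℤ → (ℤ → ℂ) → ℂ)
    (hτ : ∀ m n : ℤ, ∀ t : ℤ → ℂ, τ m n t ≠ 0)
    (hperM : ∀ m n : ℤ, ∀ t : ℤ → ℂ, τ (m + (M : ℤ)) n t = τ m n t)
    (hperN : ∀ m n : ℤ, ∀ t : ℤ → ℂ, τ m (n + (N : ℤ)) t = τ m n t)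
    (m n : ℤ) (t : ℤ → ℂ) :
    (∏ i ∈ Finset.range (Nat.lcm M N),
        fVar q (wOf τ) (m + (i : ℤ) + 1) (n - (i : ℤ) - 1) t) = 1 ∧
    (∏ i ∈ Finset.range (Nat.lcm M N),
        gVar q (wOf τ) (m + (i : ℤ) + 1) (n - (i : ℤ) - 1) t) = 1 := by
  constructor
  · simp only [fVar]
    rw [Finset.prod_div_distrib,
      wprod_eq_one τ M N hτ hperM hperN m n (Tshift q 1 t),
      wprod_eq_one τ M N hτ hperM hperN m n (Tshift q (-1) t)]
    norm_num
  · simp only [gVar]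
    rw [Finset.prod_div_distrib,
      wprod_eq_one τ M N hτ hperM hperN m n (Tshift q 1 (Tshift q (-1) t)),
      wprod_eq_one τ M N hτ hperM hperN m n (Tshift q (-1) (Tshift q (-2) t))]
    norm_num
end
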